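/- Let v : ℝ → ℝ be continuous and bounded with |v(x)| ≤ C(1+|x|)^{−3−ε} for some ε > 0, C > 0, and let k satisfy Im k > 0 and a(k) ≠ 0. Then for every continuous compactly supported f : ℝ → ℂ, the function u(x) = −(1/(2ik a(k))) ( f₁(x,k) ∫_{−∞}^{x} f₂(y,k) f(y) dy + f₂(x,k) ∫_{x}^{∞} f₁(y,k) f(y) dy ) is twice continuously differentiable, belongs to L²(ℝ), and satisfies −u'' + v(x)u − k²u = f on ℝ. -/

import Mathlib

/-!
Variation of parameters. The Wronskian `W = f₁' f₂ - f₁ f₂'` of two solutions is constant, here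
`W = 2ik·a(k) ≠ 0`. Writing `u = -(1/W) (f₁ G₂ + f₂ G₁)` with `G₂' = f₂ f` and `G₁' = -f₁ f`, the
terms coming from `G₁', G₂'` cancel in `u'` and add up to `-f` in `u''`, which gives the equation.
Beyond the support of `f` one of `G₁, G₂` vanishes and the other is bounded, so `u` is controlled
by `f₁` at `+∞` and by `f₂` at `-∞`; the Jost asymptotics make both decay like `e^{-Im k·|x|}`,
hence `u ∈ L²`.
-/

open Real Set MeasureTheory Filter Complex

/-- `f` (with derivative `f'` and second derivative `f''`) is a twice continuously
differentiable solution of the one-dimensional Schrödinger equation `-f'' + v·f = k²·f` on `ℝ`. -/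
def IsSchrodingerSolution (v : ℝ → ℝ) (k : ℂ) (f f' f'' : ℝ → ℂ) : Prop :=
  (∀ x : ℝ, HasDerivAt f (f' x) x) ∧ (∀ x : ℝ, HasDerivAt f' (f'' x) x) ∧
    Continuous f'' ∧ (∀ x : ℝ, -(f'' x) + (v x : ℂ) * f x = k ^ 2 * f x)

/-- The Jost asymptotics at `+∞`: `e^{-ikx} f(x) → 1` and `e^{-ikx} f'(x) → ik` as `x → +∞`. -/
def IsJostAtPlusInfinity (k : ℂ) (f f' : ℝ → ℂ) : Prop :=
  Tendsto (fun x : ℝ => Complex.exp (-Complex.I * k * x) * f x) atTop (nhds 1) ∧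
    Tendsto (fun x : ℝ => Complex.exp (-Complex.I * k * x) * f' x) atTop (nhds (Complex.I * k))

/-- The Jost asymptotics at `-∞`: `e^{ikx} f(x) → 1` and `e^{ikx} f'(x) → -ik` as `x → -∞`. -/
def IsJostAtMinusInfinity (k : ℂ) (f f' : ℝ → ℂ) : Prop :=
  Tendsto (fun x : ℝ => Complex.exp (Complex.I * k * x) * f x) atBot (nhds 1) ∧
    Tendsto (fun x : ℝ => Complex.exp (Complex.I * k * x) * f' x) atBot (nhds (-Complex.I * k))

open Asymptotics

section SetIntegral

variable {E : Type*} [NormedAddCommGroup E] [NormedSpace ℝ E] {g : ℝ → E}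

theorem hasDerivAt_setIntegral_Iic [CompleteSpace E] (hg : Integrable g) {x : ℝ}
    (hgx : ContinuousAt g x) :
    HasDerivAt (fun t => ∫ y in Iic t, g y) (g x) x := by
  have h := intervalIntegral.integral_hasDerivAt_right (a := 0) hg.intervalIntegrable
    hg.aestronglyMeasurable.stronglyMeasurableAtFilter hgx
  refine (h.const_add (∫ y in Iic 0, g y)).congr_of_eventuallyEq (.of_forall fun t => ?_)
  dsimp only
  rw [← intervalIntegral.integral_Iic_sub_Iic hg.integrableOn hg.integrableOn, add_sub_cancel]

theorem setIntegral_Ici_eq_integral_sub (hg : Integrable g) (t : ℝ) :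
    ∫ y in Ici t, g y = (∫ y, g y) - ∫ y in Iic t, g y := by
  rw [integral_Iic_eq_integral_Iio, eq_sub_iff_add_eq',
    intervalIntegral.integral_Iio_add_Ici hg.integrableOn hg.integrableOn]

theorem hasDerivAt_setIntegral_Ici [CompleteSpace E] (hg : Integrable g) {x : ℝ}
    (hgx : ContinuousAt g x) :
    HasDerivAt (fun t => ∫ y in Ici t, g y) (-g x) x := by
  simpa only [setIntegral_Ici_eq_integral_sub hg, zero_sub] using
    (hasDerivAt_setIntegral_Iic hg hgx).const_sub (∫ y, g y)

theorem isBigO_one_setIntegral {ι : Type*} (hg : Integrable g) (s : ι → Set ℝ) (l : Filter ι) :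
    (fun i => ∫ y in s i, g y) =O[l] fun _ => (1 : ℝ) :=
  (isBigO_one_iff ℝ).2 ⟨∫ y, ‖g y‖, eventually_map.2 <| .of_forall fun _ =>
    (norm_integral_le_integral_norm _).trans
      (setIntegral_le_integral hg.norm (.of_forall fun _ => norm_nonneg _))⟩

theorem HasCompactSupport.eventually_setIntegral_Ici_eq_zero (hg : HasCompactSupport g) :
    ∀ᶠ x in atTop, ∫ y in Ici x, g y = 0 := by
  obtain ⟨R, hR⟩ := hg.isCompact.bddAbove
  filter_upwards [eventually_gt_atTop R] with x hx
  exact setIntegral_eq_zero_of_forall_eq_zero fun y hy =>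
    image_eq_zero_of_notMem_tsupport fun hy' => (hx.trans_le hy).not_ge (hR hy')

theorem HasCompactSupport.eventually_setIntegral_Iic_eq_zero (hg : HasCompactSupport g) :
    ∀ᶠ x in atBot, ∫ y in Iic x, g y = 0 := by
  obtain ⟨R, hR⟩ := hg.isCompact.bddBelow
  filter_upwards [eventually_lt_atBot R] with x hx
  exact setIntegral_eq_zero_of_forall_eq_zero fun y hy =>
    image_eq_zero_of_notMem_tsupport fun hy' => (hx.trans_le (hR hy')).not_ge hy

end SetIntegral

theorem memLp_two_of_isBigO_exp {E : Type*} [NormedAddCommGroup E] {u : ℝ → E}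
    (hu : Continuous u) {b : ℝ} (hb : 0 < b)
    (hbot : u =O[atBot] fun x => rexp (b * x)) (htop : u =O[atTop] fun x => rexp (-b * x)) :
    MemLp u 2 volume := by
  have hsq : ∀ c : ℝ, (fun x => rexp (c * x) ^ 2) = fun x => rexp (2 * c * x) := fun c => by
    ext x; rw [← Real.exp_nat_mul]; ring_nf
  refine (memLp_two_iff_integrable_sq_norm hu.aestronglyMeasurable).2 <|
    (hu.norm.pow 2).locallyIntegrable.integrable_of_isBigO_atBot_atTop
      (g := fun x => rexp (2 * b * x)) (g' := fun x => rexp (-(2 * b) * x)) ?_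
      ⟨Iic 0, Iic_mem_atBot 0, integrableOn_exp_mul_Iic (by positivity) 0⟩ ?_
      ⟨Ioi 0, Ioi_mem_atTop 0, exp_neg_integrableOn_Ioi 0 (by positivity)⟩
  · simpa only [hsq] using hbot.norm_left.pow 2
  · simpa only [hsq, mul_neg] using htop.norm_left.pow 2

theorem isBigO_rexp_of_tendsto_cexp_mul {l : Filter ℝ} {c L : ℂ} {φ : ℝ → ℂ}
    (h : Tendsto (fun x : ℝ => cexp (c * x) * φ x) l (nhds L)) :
    φ =O[l] fun x => rexp (-c.re * x) := by
  have hexp : (fun x : ℝ => cexp (-(c * x))) =O[l] fun x => rexp (-c.re * x) :=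
    isBigO_of_le l fun x => by simp [Complex.norm_exp]
  refine (hexp.mul (h.isBigO_one ℝ)).congr' (.of_forall fun x => ?_)
    (.of_forall fun x => mul_one _)
  dsimp only
  rw [← mul_assoc, ← Complex.exp_add, neg_add_cancel, Complex.exp_zero, one_mul]

def wronskian (f f' g g' : ℝ → ℂ) (x : ℝ) : ℂ := f' x * g x - f x * g' x

noncomputable def greenIntegral (φ₁ φ₂ f : ℝ → ℂ) (x : ℝ) : ℂ :=
  φ₁ x * (∫ y in Iic x, φ₂ y * f y) + φ₂ x * ∫ y in Ici x, φ₁ y * f y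

theorem greenIntegral_isBigO_atTop {φ₁ φ₂ f : ℝ → ℂ} {e : ℝ → ℝ} (hφ₁ : φ₁ =O[atTop] e)
    (hint : Integrable fun y => φ₂ y * f y) (hsupp : HasCompactSupport fun y => φ₁ y * f y) :
    greenIntegral φ₁ φ₂ f =O[atTop] e := by
  refine (hφ₁.mul (isBigO_one_setIntegral hint Iic atTop)).congr' ?_ (.of_forall fun _ => mul_one _)
  filter_upwards [hsupp.eventually_setIntegral_Ici_eq_zero] with x hx
  rw [greenIntegral, hx, mul_zero, add_zero]

theorem greenIntegral_isBigO_atBot {φ₁ φ₂ f : ℝ → ℂ} {e : ℝ → ℝ} (hφ₂ : φ₂ =O[atBot] e)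
    (hint : Integrable fun y => φ₁ y * f y) (hsupp : HasCompactSupport fun y => φ₂ y * f y) :
    greenIntegral φ₁ φ₂ f =O[atBot] e := by
  refine (hφ₂.mul (isBigO_one_setIntegral hint Ici atBot)).congr' ?_ (.of_forall fun _ => mul_one _)
  filter_upwards [hsupp.eventually_setIntegral_Iic_eq_zero] with x hx
  rw [greenIntegral, hx, mul_zero, zero_add]

namespace IsSchrodingerSolution

variable {v : ℝ → ℝ} {k : ℂ} {f₁ f₁' f₁'' f₂ f₂' f₂'' : ℝ → ℂ}

theorem continuous (h : IsSchrodingerSolution v k f₁ f₁' f₁'') : Continuous f₁ :=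
  continuous_iff_continuousAt.2 fun x => (h.1 x).continuousAt

theorem second_deriv_eq (h : IsSchrodingerSolution v k f₁ f₁' f₁'') (x : ℝ) :
    f₁'' x = (v x - k ^ 2) * f₁ x := by
  linear_combination -h.2.2.2 x

theorem hasDerivAt_wronskian (h1 : IsSchrodingerSolution v k f₁ f₁' f₁'')
    (h2 : IsSchrodingerSolution v k f₂ f₂' f₂'') (x : ℝ) :
    HasDerivAt (wronskian f₁ f₁' f₂ f₂') 0 x := by
  refine (((h1.2.1 x).mul (h2.1 x)).sub ((h1.1 x).mul (h2.2.1 x))).congr_deriv ?_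
  rw [h1.second_deriv_eq, h2.second_deriv_eq]
  ring

theorem wronskian_eq (h1 : IsSchrodingerSolution v k f₁ f₁' f₁'')
    (h2 : IsSchrodingerSolution v k f₂ f₂' f₂'') (x y : ℝ) :
    wronskian f₁ f₁' f₂ f₂' x = wronskian f₁ f₁' f₂ f₂' y :=
  is_const_of_deriv_eq_zero (fun x => (h1.hasDerivAt_wronskian h2 x).differentiableAt)
    (fun x => (h1.hasDerivAt_wronskian h2 x).deriv) x y

theorem exists_solution_greenIntegral (h1 : IsSchrodingerSolution v k f₁ f₁' f₁'')
    (h2 : IsSchrodingerSolution v k f₂ f₂' f₂'') {W : ℂ} (hW0 : W ≠ 0)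
    (hW : ∀ x, wronskian f₁ f₁' f₂ f₂' x = W) {f : ℝ → ℂ} (hf : Continuous f)
    (hint₁ : Integrable fun y => f₁ y * f y) (hint₂ : Integrable fun y => f₂ y * f y)
    {u : ℝ → ℂ} (hu : ∀ x, u x = -(1 / W) * greenIntegral f₁ f₂ f x) :
    ∃ u' u'' : ℝ → ℂ, (∀ x, HasDerivAt u (u' x) x) ∧ (∀ x, HasDerivAt u' (u'' x) x) ∧
      Continuous u'' ∧ ∀ x, -(u'' x) + (v x : ℂ) * u x - k ^ 2 * u x = f x := by
  set G₂ : ℝ → ℂ := fun x => ∫ y in Iic x, f₂ y * f y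
  set G₁ : ℝ → ℂ := fun x => ∫ y in Ici x, f₁ y * f y
  have hG₂ (x : ℝ) : HasDerivAt G₂ (f₂ x * f x) x :=
    hasDerivAt_setIntegral_Iic hint₂ (h2.continuous.mul hf).continuousAt
  have hG₁ (x : ℝ) : HasDerivAt G₁ (-(f₁ x * f x)) x :=
    hasDerivAt_setIntegral_Ici hint₁ (h1.continuous.mul hf).continuousAt
  have hG₁c : Continuous G₁ := continuous_iff_continuousAt.2 fun x => (hG₁ x).continuousAt
  have hG₂c : Continuous G₂ := continuous_iff_continuousAt.2 fun x => (hG₂ x).continuousAt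
  refine ⟨fun x => -(1 / W) * (f₁' x * G₂ x + f₂' x * G₁ x),
    fun x => -(1 / W) * (f₁'' x * G₂ x + f₂'' x * G₁ x) - f x, fun x => ?_, fun x => ?_,
    (continuous_const.mul ((h1.2.2.1.mul hG₂c).add (h2.2.2.1.mul hG₁c))).sub hf, fun x => ?_⟩
  · refine ((((h1.1 x).mul (hG₂ x)).add ((h2.1 x).mul (hG₁ x))).const_mul _).congr_of_eventuallyEq
      (.of_forall hu) |>.congr_deriv ?_
    ring
  · refine ((((h1.2.1 x).mul (hG₂ x)).add ((h2.2.1 x).mul (hG₁ x))).const_mul _).congr_deriv ?_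
    have hWx := hW x
    rw [wronskian] at hWx
    have hWinv : -(1 / W) * W = -1 := by field_simp
    linear_combination (-(1 / W) * f x) * hWx + f x * hWinv
  · beta_reduce
    rw [hu, h1.second_deriv_eq, h2.second_deriv_eq, greenIntegral]
    ring

end IsSchrodingerSolution

theorem schrodinger_resolvent_solves_general
    (v : ℝ → ℝ)
    (k : ℂ) (hk : 0 < k.im)
    (f₁ f₁' f₁'' f₂ f₂' f₂'' : ℝ → ℂ)
    (h1 : IsSchrodingerSolution v k f₁ f₁' f₁'')
    (hj1 : IsJostAtPlusInfinity k f₁ f₁')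
    (h2 : IsSchrodingerSolution v k f₂ f₂' f₂'')
    (hj2 : IsJostAtMinusInfinity k f₂ f₂')
    (a : ℂ) (hadef : a = (f₁' 0 * f₂ 0 - f₁ 0 * f₂' 0) / (2 * Complex.I * k)) (ha : a ≠ 0)
    (f : ℝ → ℂ) (hf : Continuous f) (hsupp : HasCompactSupport f)
    (u : ℝ → ℂ)
    (hu : ∀ x : ℝ, u x = -(1 / (2 * Complex.I * k * a)) *
      (f₁ x * (∫ y in Iic x, f₂ y * f y) + f₂ x * (∫ y in Ici x, f₁ y * f y))) :
    ∃ u' u'' : ℝ → ℂ,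
      (∀ x : ℝ, HasDerivAt u (u' x) x) ∧ (∀ x : ℝ, HasDerivAt u' (u'' x) x) ∧
      Continuous u'' ∧ MemLp u 2 volume ∧
      (∀ x : ℝ, -(u'' x) + (v x : ℂ) * u x - k ^ 2 * u x = f x) := by
  have hk0 : k ≠ 0 := by rintro rfl; simp at hk
  have hW (x : ℝ) : wronskian f₁ f₁' f₂ f₂' x = 2 * Complex.I * k * a := by
    rw [h1.wronskian_eq h2 x 0, hadef, wronskian]
    field_simp
  have hsupp₁ : HasCompactSupport fun y => f₁ y * f y := hsupp.mul_left
  have hsupp₂ : HasCompactSupport fun y => f₂ y * f y := hsupp.mul_left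
  have hint₁ : Integrable fun y => f₁ y * f y :=
    (h1.continuous.mul hf).integrable_of_hasCompactSupport hsupp₁
  have hint₂ : Integrable fun y => f₂ y * f y :=
    (h2.continuous.mul hf).integrable_of_hasCompactSupport hsupp₂
  obtain ⟨u', u'', hu', hu'', hu''c, hsol⟩ :=
    h1.exists_solution_greenIntegral h2 (by simp [hk0, ha]) hW hf hint₁ hint₂ hu
  refine ⟨u', u'', hu', hu'', hu''c, ?_, hsol⟩
  obtain rfl : u = fun x => -(1 / (2 * Complex.I * k * a)) * greenIntegral f₁ f₂ f x :=
    funext hu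
  have hbot := (greenIntegral_isBigO_atBot (isBigO_rexp_of_tendsto_cexp_mul hj2.1) hint₁
    hsupp₂).const_mul_left (-(1 / (2 * Complex.I * k * a)))
  have htop := (greenIntegral_isBigO_atTop (isBigO_rexp_of_tendsto_cexp_mul hj1.1) hint₂
    hsupp₁).const_mul_left (-(1 / (2 * Complex.I * k * a)))
  simp only [mul_re, neg_re, neg_im, I_re, I_im, neg_zero, zero_mul, one_mul, neg_one_mul,
    zero_sub, neg_neg] at hbot htop
  exact memLp_two_of_isBigO_exp (continuous_iff_continuousAt.2 fun x => (hu' x).continuousAt) hk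
    hbot htop

/-- for `Im k > 0` with `a(k) ≠ 0`, applying the resolvent kernel of the
one-dimensional Schrödinger operator to a continuous compactly supported `f` gives a twice
continuously differentiable function `u ∈ L²(ℝ)` solving `-u'' + v·u - k²·u = f`. Here
`a(k) = W(f₁(·,k), f₂(·,k))/(2ik)` and
`u(x) = -(1/(2ik a(k))) (f₁(x,k) ∫_{-∞}^x f₂ f + f₂(x,k) ∫_x^∞ f₁ f)`. -/
theorem schrodinger_resolvent_solves
    (v : ℝ → ℝ) (hv : Continuous v)
    (ε C₀ : ℝ) (hε : 0 < ε) (hC₀ : 0 < C₀)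
    (hbound : ∀ x : ℝ, |v x| ≤ C₀ * (1 + |x|) ^ (-(3 + ε)))
    (k : ℂ) (hk : 0 < k.im)
    (f₁ f₁' f₁'' f₂ f₂' f₂'' : ℝ → ℂ)
    (h1 : IsSchrodingerSolution v k f₁ f₁' f₁'')
    (hj1 : IsJostAtPlusInfinity k f₁ f₁')
    (h2 : IsSchrodingerSolution v k f₂ f₂' f₂'')
    (hj2 : IsJostAtMinusInfinity k f₂ f₂')
    (a : ℂ) (hadef : a = (f₁' 0 * f₂ 0 - f₁ 0 * f₂' 0) / (2 * Complex.I * k)) (ha : a ≠ 0)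
    (f : ℝ → ℂ) (hf : Continuous f) (hsupp : HasCompactSupport f)
    (u : ℝ → ℂ)
    (hu : ∀ x : ℝ, u x = -(1 / (2 * Complex.I * k * a)) *
      (f₁ x * (∫ y in Iic x, f₂ y * f y) + f₂ x * (∫ y in Ici x, f₁ y * f y))) :
    ∃ u' u'' : ℝ → ℂ,
      (∀ x : ℝ, HasDerivAt u (u' x) x) ∧ (∀ x : ℝ, HasDerivAt u' (u'' x) x) ∧
      Continuous u'' ∧ MemLp u 2 volume ∧
      (∀ x : ℝ, -(u'' x) + (v x : ℂ) * u x - k ^ 2 * u x = f x) :=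
  schrodinger_resolvent_solves_general v k hk f₁ f₁' f₁'' f₂ f₂' f₂'' h1 hj1 h2 hj2 a hadef ha f hf
    hsupp u hu
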